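/- (Laplace's method, simplest instance) For a continuous function g on [a,b] attaining a strict maximum at an interior point c with g twice continuously differentiable near c and g''(c) < 0, the integrals I_n = ∫_a^b e^{n g(x)} dx satisfy (1/n) log I_n → g(c) as n → ∞. -/

import Mathlib

/-!
The integral `I_n = ∫_a^b e^{n g}` is at most `(b - a) e^{n g(c)}`, and for every `m < g(c)`
it is at least `2r e^{n m}`, where `g > m` on `[c - r, c + r]` by continuity at the interior
point `c`. Taking `(1/n) log` of both bounds, the constants contribute `O(1/n)`, so the limit is
squeezed between every `m < g(c)` and `g(c)`.
-/

open Set Filter Topology Real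

theorem one_div_mul_log_mul_exp {C : ℝ} (hC : 0 < C) {t : ℝ} (ht : t ≠ 0) (m : ℝ) :
    1 / t * log (C * exp (t * m)) = log C / t + m := by
  rw [log_mul hC.ne' (exp_ne_zero _), log_exp]
  field_simp

theorem tendsto_div_natCast_add (C m : ℝ) :
    Tendsto (fun n : ℕ => C / n + m) atTop (𝓝 m) := by
  simpa using (tendsto_const_div_atTop_nhds_zero_nat C).add_const m

theorem tendsto_one_div_mul_log_of_exp_bounds {I : ℕ → ℝ} {M C : ℝ} (hC : 0 < C)
    (hupper : ∀ᶠ n : ℕ in atTop, I n ≤ C * exp (n * M))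
    (hlower : ∀ m < M, ∃ c > 0, ∀ᶠ n : ℕ in atTop, c * exp (n * m) ≤ I n) :
    Tendsto (fun n : ℕ => 1 / (n : ℝ) * log (I n)) atTop (𝓝 M) := by
  have hpos : ∀ᶠ n in atTop, 0 < I n := by
    obtain ⟨c, hc, hI⟩ := hlower (M - 1) (by linarith)
    filter_upwards [hI] with n hn using lt_of_lt_of_le (by positivity) hn
  refine tendsto_order.2 ⟨fun m' hm' => ?_, fun M' hM' => ?_⟩
  · obtain ⟨m, hm'm, hmM⟩ := exists_between hm'
    obtain ⟨c, hc, hI⟩ := hlower m hmM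
    filter_upwards [hI, (tendsto_div_natCast_add (log c) m).eventually (eventually_gt_nhds hm'm),
      eventually_ge_atTop 1] with n hn hlt hn1
    have hn0 : (0 : ℝ) < n := by exact_mod_cast hn1
    calc m' < log c / n + m := hlt
      _ = 1 / (n : ℝ) * log (c * exp (n * m)) := (one_div_mul_log_mul_exp hc hn0.ne' m).symm
      _ ≤ 1 / (n : ℝ) * log (I n) := by gcongr
  · filter_upwards [hupper, hpos,
      (tendsto_div_natCast_add (log C) M).eventually (eventually_lt_nhds hM'),
      eventually_ge_atTop 1] with n hn hIn hlt hn1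
    have hn0 : (0 : ℝ) < n := by exact_mod_cast hn1
    calc 1 / (n : ℝ) * log (I n) ≤ 1 / (n : ℝ) * log (C * exp (n * M)) := by
          gcongr
      _ = log C / n + M := one_div_mul_log_mul_exp hC hn0.ne' M
      _ < M' := hlt

theorem intervalIntegral_exp_mul_le {a b M t : ℝ} (hab : a ≤ b) (ht : 0 ≤ t) {g : ℝ → ℝ}
    (hM : ∀ x ∈ Icc a b, g x ≤ M) :
    ∫ x in a..b, exp (t * g x) ≤ (b - a) * exp (t * M) := by
  have hnorm := intervalIntegral.norm_integral_le_of_norm_le_const (a := a) (b := b)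
    (C := exp (t * M)) (f := fun x => exp (t * g x)) fun x hx => by
      rw [uIoc_of_le hab] at hx
      rw [norm_of_nonneg (exp_pos _).le]
      gcongr
      exact hM x (Ioc_subset_Icc_self hx)
  rw [abs_of_nonneg (sub_nonneg.2 hab), mul_comm] at hnorm
  exact (le_abs_self _).trans hnorm

theorem sub_mul_le_intervalIntegral_of_le_on {f : ℝ → ℝ} {a b a' b' K : ℝ}
    (ha : a ≤ a') (hab' : a' ≤ b') (hb : b' ≤ b)
    (hf : IntervalIntegrable f MeasureTheory.volume a b)
    (hf0 : ∀ x ∈ Icc a b, 0 ≤ f x) (hK : ∀ x ∈ Icc a' b', K ≤ f x) :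
    (b' - a') * K ≤ ∫ x in a..b, f x := by
  have hsub : uIcc a' b' ⊆ uIcc a b := by
    rw [uIcc_of_le hab', uIcc_of_le (ha.trans (hab'.trans hb))]
    exact Icc_subset_Icc ha hb
  calc (b' - a') * K = ∫ _ in a'..b', K := by simp
    _ ≤ ∫ x in a'..b', f x :=
      intervalIntegral.integral_mono_on hab' intervalIntegrable_const (hf.mono_set hsub) hK
    _ ≤ ∫ x in a..b, f x :=
      intervalIntegral.integral_mono_interval ha hab' hb
        ((MeasureTheory.ae_restrict_iff' measurableSet_Ioc).2
          (Eventually.of_forall fun x hx => hf0 x (Ioc_subset_Icc_self hx))) hf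

theorem exists_pos_mul_exp_le_intervalIntegral {a b c m : ℝ} (hac : a < c) (hcb : c < b)
    {g : ℝ → ℝ} (hg : ContinuousOn g (Icc a b)) (hm : m < g c) :
    ∃ C > 0, ∀ t ≥ 0, C * exp (t * m) ≤ ∫ x in a..b, exp (t * g x) := by
  have hIcc : ∀ᶠ x in 𝓝 c, x ∈ Icc a b := Icc_mem_nhds hac hcb
  have hnear : ∀ᶠ x in 𝓝 c, x ∈ Icc a b ∧ m < g x :=
    hIcc.and ((hg.continuousAt hIcc).eventually (eventually_gt_nhds hm))
  obtain ⟨r, hr, hball⟩ := Metric.nhds_basis_closedBall.eventually_iff.1 hnear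
  rw [closedBall_eq_Icc] at hball
  have hsub : Icc (c - r) (c + r) ⊆ Icc a b := fun x hx => (hball hx).1
  have hra : a ≤ c - r := (hsub (left_mem_Icc.2 (by linarith))).1
  have hrb : c + r ≤ b := (hsub (right_mem_Icc.2 (by linarith))).2
  refine ⟨2 * r, by positivity, fun t ht => ?_⟩
  have hint : IntervalIntegrable (fun x => exp (t * g x)) MeasureTheory.volume a b :=
    ((continuous_exp.comp_continuousOn (continuousOn_const.mul hg)).mono
      (uIcc_of_le (hac.trans hcb).le).subset).intervalIntegrable
  convert sub_mul_le_intervalIntegral_of_le_on hra (by linarith) hrb hint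
    (fun x _ => (exp_pos _).le) fun x hx => exp_le_exp.2 (mul_le_mul_of_nonneg_left
      (hball hx).2.le ht) using 2
  ring

theorem laplace_method_general (a b c : ℝ) (hac : a < c) (hcb : c < b)
    (g : ℝ → ℝ) (hg : ContinuousOn g (Set.Icc a b))
    (hmax : ∀ x ∈ Set.Icc a b, x ≠ c → g x < g c) :
    Filter.Tendsto
      (fun n : ℕ => (1 / (n : ℝ)) * Real.log (∫ x in a..b, Real.exp (n * g x)))
      Filter.atTop (nhds (g c)) := by
  have hle : ∀ x ∈ Icc a b, g x ≤ g c := fun x hx =>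
    (eq_or_ne x c).elim (fun h => h ▸ le_rfl) fun h => (hmax x hx h).le
  refine tendsto_one_div_mul_log_of_exp_bounds (sub_pos.2 (hac.trans hcb))
    (Eventually.of_forall fun n => intervalIntegral_exp_mul_le (hac.trans hcb).le n.cast_nonneg hle)
    fun m hm => ?_
  obtain ⟨C, hC, hlow⟩ := exists_pos_mul_exp_le_intervalIntegral hac hcb hg hm
  exact ⟨C, hC, Eventually.of_forall fun n => hlow n n.cast_nonneg⟩

/-- Laplace's method, simplest instance: `(1/n) log ∫_a^b e^{n g(x)} dx → g(c)`. -/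
theorem laplace_method (a b c : ℝ) (hac : a < c) (hcb : c < b)
    (g : ℝ → ℝ) (hg : ContinuousOn g (Set.Icc a b))
    (hmax : ∀ x ∈ Set.Icc a b, x ≠ c → g x < g c)
    (δ : ℝ) (hδ : 0 < δ)
    (hC2 : ContDiffOn ℝ 2 g (Metric.ball c δ))
    (hg'' : deriv (deriv g) c < 0) :
    Filter.Tendsto
      (fun n : ℕ => (1 / (n : ℝ)) * Real.log (∫ x in a..b, Real.exp (n * g x)))
      Filter.atTop (nhds (g c)) :=
  laplace_method_general a b c hac hcb g hg hmax
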